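/- arXiv:2107.06759 — 2 statements merged into one kernel-verified Lean document; each statement's English description precedes it below -/
import Mathlib

section
/- Let (A, λ_A) be an object of C_𝒪 and M a finitely generated A-module with depth_A M ≥ 1. Then M[𝔭_A] ∩ M[I_A] = (0); in particular I_A·M ∩ 𝔭_A·M = (0). -/
open IsLocalRing CategoryTheory

noncomputable section

/-- The length of a module, defined as the Krull dimension of its lattice of submodules. -/
noncomputable def mLength (R M : Type) [Ring R] [AddCommGroup M] [Module R M] :
    WithBot ℕ∞ :=
  Order.krullDim (Submodule R M)

/-- The depth of a module over a local ring: the supremum of the lengths of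
regular sequences on `M` consisting of elements of the maximal ideal. -/
noncomputable def mDepth (A : Type) [CommRing A] [IsLocalRing A]
    (M : Type) [AddCommGroup M] [Module A M] : ℕ∞ :=
  sSup {n : ℕ∞ | ∃ rs : List A, (rs.length : ℕ∞) = n ∧
    (∀ x ∈ rs, x ∈ maximalIdeal A) ∧ RingTheory.Sequence.IsRegular M rs}

/-- The `𝒪`-module structure on an `A`-module killed by `ker lam`,
obtained through the isomorphism `A ⧸ ker lam ≃ 𝒪`. -/
noncomputable def oModule {𝒪 A : Type} [CommRing 𝒪] [CommRing A] (lam : A →+* 𝒪)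
    (hs : Function.Surjective lam) (M : Type) [AddCommGroup M] [Module A M]
    (h : Module.IsTorsionBySet A M (RingHom.ker lam : Set A)) : Module 𝒪 M :=
  letI := h.module
  Module.compHom M (RingHom.quotientKerEquivOfSurjective hs).symm.toRingHom

/-- The length over `𝒪` of an `A`-module killed by `ker lam`. -/
noncomputable def oLength {𝒪 A : Type} [CommRing 𝒪] [CommRing A] (lam : A →+* 𝒪)
    (hs : Function.Surjective lam) (M : Type) [AddCommGroup M] [Module A M]
    (h : Module.IsTorsionBySet A M (RingHom.ker lam : Set A)) : WithBot ℕ∞ :=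
  letI := oModule lam hs M h
  mLength 𝒪 M

/-- `M` has finite length as an `𝒪`-module. -/
def OFiniteLength {𝒪 A : Type} [CommRing 𝒪] [CommRing A] (lam : A →+* 𝒪)
    (hs : Function.Surjective lam) (M : Type) [AddCommGroup M] [Module A M]
    (h : Module.IsTorsionBySet A M (RingHom.ker lam : Set A)) : Prop :=
  letI := oModule lam hs M h
  IsFiniteLength 𝒪 M

/-- The rank over `𝒪` of an `A`-module killed by `ker lam`: the dimension over the
fraction field `K` of `𝒪` of the base change `K ⊗_𝒪 M`. -/
noncomputable def oRank {𝒪 A : Type} [CommRing 𝒪] [IsDomain 𝒪] [CommRing A] (lam : A →+* 𝒪)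
    (hs : Function.Surjective lam) (M : Type) [AddCommGroup M] [Module A M]
    (h : Module.IsTorsionBySet A M (RingHom.ker lam : Set A)) : Cardinal :=
  letI := oModule lam hs M h
  Module.rank (FractionRing 𝒪) (TensorProduct 𝒪 (FractionRing 𝒪) M)

lemma torsionBySet_torsion {A M : Type} [CommRing A] [AddCommGroup M] [Module A M]
    (s : Set A) : Module.IsTorsionBySet A (Submodule.torsionBySet A M s) s :=
  Submodule.torsionBySet_isTorsionBySet s

/-- The annihilator `A[J]` of an ideal `J` is killed by `J`. -/
lemma annihilator_torsion {A : Type} [CommRing A] (J : Ideal A) :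
    Module.IsTorsionBySet A (Submodule.annihilator J) (J : Set A) := by
  rintro ⟨x, hx⟩ ⟨a, ha⟩
  apply Subtype.ext
  have := (Submodule.mem_annihilator.mp hx) a ha
  simpa [smul_eq_mul, mul_comm] using this

lemma submodule_torsion {A M : Type} [CommRing A] [AddCommGroup M] [Module A M] {s : Set A}
    (h : Module.IsTorsionBySet A M s) (P : Submodule A M) :
    Module.IsTorsionBySet A P s := by
  rintro ⟨x, hx⟩ a
  apply Subtype.ext
  simpa using @h x a

lemma quotient_torsion {A M : Type} [CommRing A] [AddCommGroup M] [Module A M] {s : Set A}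
    (h : Module.IsTorsionBySet A M s) (P : Submodule A M) :
    Module.IsTorsionBySet A (M ⧸ P) s := by
  rintro x a
  obtain ⟨y, rfl⟩ := Submodule.Quotient.mk_surjective P x
  rw [← Submodule.Quotient.mk_smul, @h y a]
  rfl

lemma cotangent_torsion {A : Type} [CommRing A] {I : Ideal A} {s : Set A}
    (h : Module.IsTorsionBySet A I s) :
    Module.IsTorsionBySet A I.Cotangent s := by
  rintro x a
  obtain ⟨y, rfl⟩ := I.toCotangent_surjective x
  rw [← map_smul, @h y a, map_zero]

/-- The conormal module `I/I²` is killed by `I`. -/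
lemma conormal_torsion {A : Type} [CommRing A] (I : Ideal A) :
    Module.IsTorsionBySet A I.Cotangent (I : Set A) := by
  rintro x ⟨a, ha⟩
  obtain ⟨y, rfl⟩ := I.toCotangent_surjective x
  rw [← map_smul]
  refine (I.toCotangent_eq_zero _).mpr ?_
  have : ((a • y : I) : A) = a * (y : A) := rfl
  rw [this, pow_two]
  exact Ideal.mul_mem_mul ha y.2

/-- If `P` contains the `A[J]`-torsion of `M`, then `M ⧸ P` is killed by `J`;
in particular congruence modules `M/(M[𝔭] + M[I])` are killed by `𝔭`. -/
lemma quot_tors {A M : Type} [CommRing A] [AddCommGroup M] [Module A M] (J : Ideal A)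
    (P : Submodule A M)
    (hP : Submodule.torsionBySet A M ((Submodule.annihilator J : Ideal A) : Set A) ≤ P) :
    Module.IsTorsionBySet A (M ⧸ P) (J : Set A) := by
  rintro x ⟨a, ha⟩
  obtain ⟨y, rfl⟩ := Submodule.Quotient.mk_surjective P x
  rw [← Submodule.Quotient.mk_smul, Submodule.Quotient.mk_eq_zero]
  apply hP
  rw [Submodule.mem_torsionBySet_iff]
  rintro ⟨b, hb⟩
  have hba : b * a = 0 := (Submodule.mem_annihilator.mp hb) a ha
  calc b • a • y = (b * a) • y := (mul_smul b a y).symm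
  _ = 0 := by rw [hba, zero_smul]

/-- A commutative ring has finite self-injective dimension if `Ext^i(-, R)`
vanishes for all large `i`.  For a noetherian local ring this is
the Gorenstein condition. -/
def HasFiniteInjectiveDimension (A : Type) [CommRing A] : Prop :=
  ∃ n : ℕ, ∀ (M : ModuleCat A) (i : ℕ), n < i →
    Subsingleton (((Ext A (ModuleCat A) i).obj (Opposite.op M)).obj (ModuleCat.of A A))

/-- A noetherian local ring is regular if the dimension of its cotangent space
equals its Krull dimension. -/
def IsRegularLocal (R : Type) [CommRing R] [IsLocalRing R] [IsNoetherianRing R] : Prop :=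
  (Module.finrank (ResidueField R) (CotangentSpace R) : WithBot ℕ∞) = ringKrullDim R

/-- A noetherian local ring is a complete intersection if its completion at the
maximal ideal is isomorphic to a regular local ring modulo an ideal generated by a
regular sequence. -/
def IsCompleteIntersectionLocal (A : Type) [CommRing A] [IsLocalRing A] : Prop :=
  ∃ (R : Type) (_ : CommRing R) (_ : IsLocalRing R) (_ : IsNoetherianRing R) (rs : List R),
    IsRegularLocal R ∧ (∀ x ∈ rs, x ∈ maximalIdeal R) ∧
    RingTheory.Sequence.IsRegular R rs ∧
    Nonempty ((AdicCompletion (maximalIdeal A) A) ≃+* (R ⧸ Ideal.ofList rs))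

/-- The ideal `Γ_{𝔪}(A)` of elements killed by a power of the maximal ideal. -/
noncomputable def powerTorsionIdeal (A : Type) [CommRing A] [IsLocalRing A] : Ideal A :=
  ⨆ n : ℕ, Submodule.torsionBySet A A ((maximalIdeal A ^ n : Ideal A) : Set A)

end

/-!
Write `𝔭 = ker λ`. The `𝒪`-module `𝔭/𝔭²` has finite length, so it is killed by a power `ϖᵏ`
of a uniformizer, and a lift `t` of `ϖᵏ` satisfies `t𝔭 ⊆ 𝔭²`. The determinant trick applied to
multiplication by `t` on `𝔭` yields `s ≡ tⁿ (mod 𝔭)` with `s𝔭 = 0`, so `I_A ⊄ 𝔭`. Since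
`λ(s) ≠ 0` divides a power of every element of the maximal ideal of `𝒪`, the ideal `𝔭 + I_A`
contains a power of an `M`-regular element, which therefore kills `M[𝔭] ∩ M[I_A] = M[𝔭 + I_A]`.
Finally `I_A · 𝔭 = 0` gives `I_A·M ⊆ M[𝔭]` and `𝔭·M ⊆ M[I_A]`.
-/

open Polynomial in
theorem exists_sub_pow_mem_and_smul_eq_zero {R M : Type*} [CommRing R] [AddCommGroup M]
    [Module R M] [Module.Finite R M] (I : Ideal R) {t : R}
    (ht : ∀ m : M, t • m ∈ I • (⊤ : Submodule R M)) :
    ∃ (n : ℕ) (s : R), s - t ^ n ∈ I ∧ ∀ m : M, s • m = 0 := by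
  obtain ⟨p, hmonic, -, hcoeff, hp⟩ :=
    LinearMap.exists_monic_and_natDegree_eq_and_coeff_mem_pow_and_aeval_eq_zero R
      (algebraMap R (Module.End R M) t) I (by rintro _ ⟨m, rfl⟩; exact ht m)
  refine ⟨p.natDegree, p.eval t, ?_, fun m ↦ ?_⟩
  · rw [eval_eq_sum_range, Finset.sum_range_succ, hmonic.coeff_natDegree, one_mul,
      add_sub_cancel_right]
    exact Ideal.sum_mem _ fun k hk ↦ Ideal.mul_mem_right _ _
      (Ideal.pow_le_self (Nat.sub_ne_zero_of_lt (Finset.mem_range.mp hk)) (hcoeff k))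
  · rw [aeval_algebraMap_apply, coe_aeval_eq_eval] at hp
    simpa using LinearMap.congr_fun hp m

theorem exists_pow_smul_eq_zero_of_isFiniteLength {R M : Type*} [CommRing R] [AddCommGroup M]
    [Module R M] (hM : IsFiniteLength R M) {r : R} (hr : r ∈ Ideal.jacobson ⊥) :
    ∃ n : ℕ, ∀ m : M, r ^ n • m = 0 := by
  obtain ⟨_, _⟩ := isFiniteLength_iff_isNoetherian_isArtinian.mp hM
  obtain ⟨n, hn⟩ := IsArtinian.range_smul_pow_stabilizes M r
  set N := LinearMap.range (r ^ n • LinearMap.id : M →ₗ[R] M)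
  have hN : N ≤ Ideal.span {r} • N := by
    intro x hx
    obtain ⟨m, rfl⟩ := (hn (n + 1) n.le_succ).le hx
    change r ^ (n + 1) • m ∈ _
    rw [pow_succ', mul_smul]
    exact Submodule.smul_mem_smul (Ideal.mem_span_singleton_self r) ⟨m, rfl⟩
  have hN0 : N = ⊥ := Submodule.eq_bot_of_le_smul_of_le_jacobson_bot _ N
    (IsNoetherian.noetherian N) hN ((Ideal.span_singleton_le_iff_mem _).mpr hr)
  exact ⟨n, fun m ↦ (Submodule.eq_bot_iff N).mp hN0 _ ⟨m, rfl⟩⟩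

theorem exists_mem_annihilator_notMem_of_smul_cotangent {A : Type*} [CommRing A]
    [IsNoetherianRing A] {P : Ideal A} [P.IsPrime] {t : A} (htP : t ∉ P)
    (ht : ∀ x : P.Cotangent, t • x = 0) :
    ∃ s ∈ Submodule.annihilator P, s ∉ P := by
  obtain ⟨n, s, hs, hsP⟩ := exists_sub_pow_mem_and_smul_eq_zero (M := P) P (t := t) fun y ↦ by
    rw [← Submodule.Quotient.mk_eq_zero, Submodule.Quotient.mk_smul]
    exact ht _
  refine ⟨s, Submodule.mem_annihilator.mpr fun y hy ↦ congrArg Subtype.val (hsP ⟨y, hy⟩),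
    fun h ↦ ?_⟩
  exact htP (‹P.IsPrime›.mem_of_pow_mem n (by simpa using P.sub_mem h hs))

theorem IsDiscreteValuationRing.exists_dvd_pow {𝒪 : Type*} [CommRing 𝒪] [IsDomain 𝒪]
    [IsDiscreteValuationRing 𝒪] {c y : 𝒪} (hc : c ≠ 0) (hy : y ∈ IsLocalRing.maximalIdeal 𝒪) :
    ∃ n : ℕ, c ∣ y ^ n := by
  obtain ⟨ϖ, hϖ⟩ := IsDiscreteValuationRing.exists_irreducible 𝒪
  obtain ⟨n, hn⟩ := IsDiscreteValuationRing.associated_pow_irreducible hc hϖ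
  have : ϖ ∣ y := by
    rwa [(IsDiscreteValuationRing.irreducible_iff_uniformizer ϖ).mp hϖ,
      Ideal.mem_span_singleton] at hy
  exact ⟨n, hn.dvd.trans (pow_dvd_pow_of_dvd this n)⟩

theorem Submodule.torsionBySet_inf_torsionBySet {R M : Type*} [CommRing R] [AddCommGroup M]
    [Module R M] (I J : Ideal R) :
    torsionBySet R M I ⊓ torsionBySet R M J = torsionBySet R M ↑(I ⊔ J) := by
  refine le_antisymm (fun m hm ↦ ?_) (le_inf
    (torsionBySet_le_torsionBySet_of_subset (SetLike.coe_subset_coe.mpr le_sup_left))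
    (torsionBySet_le_torsionBySet_of_subset (SetLike.coe_subset_coe.mpr le_sup_right)))
  obtain ⟨hI, hJ⟩ := mem_inf.mp hm
  rw [mem_torsionBySet_iff] at hI hJ ⊢
  rintro ⟨a, ha⟩
  obtain ⟨b, hb, c, hc, rfl⟩ := mem_sup.mp ha
  rw [add_smul, hI ⟨b, hb⟩, hJ ⟨c, hc⟩, add_zero]

theorem Submodule.torsionBySet_eq_bot_of_isSMulRegular {R M : Type*} [CommRing R]
    [AddCommGroup M] [Module R M] {s : Set R} {x : R} (hxs : x ∈ s) (hx : IsSMulRegular M x) :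
    torsionBySet R M s = ⊥ :=
  eq_bot_iff.mpr <| calc
    torsionBySet R M s ≤ torsionBySet R M {x} :=
      torsionBySet_le_torsionBySet_of_subset (Set.singleton_subset_iff.mpr hxs)
    _ = torsionBy R M x := torsionBySet_singleton_eq x
    _ = ⊥ := (isSMulRegular_iff_torsionBy_eq_bot M x).mp hx

theorem Submodule.smul_top_le_torsionBySet {R M : Type*} [CommRing R] [AddCommGroup M]
    [Module R M] {I J : Ideal R} (h : J * I = ⊥) :
    I • (⊤ : Submodule R M) ≤ torsionBySet R M J :=
  smul_le.mpr fun r hr m _ ↦ (mem_torsionBySet_iff _ _).mpr fun ⟨a, ha⟩ ↦ by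
    have har : a * r ∈ (⊥ : Ideal R) := h ▸ Ideal.mul_mem_mul ha hr
    change a • r • m = 0
    rw [smul_smul, (mem_bot R).mp har, zero_smul]

theorem exists_isSMulRegular_of_one_le_mDepth {A M : Type} [CommRing A] [IsLocalRing A]
    [AddCommGroup M] [Module A M] (h : 1 ≤ mDepth A M) :
    ∃ x ∈ maximalIdeal A, IsSMulRegular M x := by
  by_contra! hreg
  refine absurd (h.trans (show mDepth A M ≤ 0 from sSup_le ?_)) (by simp)
  rintro _ ⟨_ | ⟨x, rs⟩, rfl, hmem, hrs⟩
  · simp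
  · exact absurd ((RingTheory.Sequence.isWeaklyRegular_cons_iff M x rs).mp
      hrs.toIsWeaklyRegular).1 (hreg x (hmem x List.mem_cons_self))

theorem oModule_smul {𝒪 A : Type} [CommRing 𝒪] [CommRing A] (lam : A →+* 𝒪)
    (hs : Function.Surjective lam) (M : Type) [AddCommGroup M] [Module A M]
    (h : Module.IsTorsionBySet A M (RingHom.ker lam : Set A)) (a : A) (m : M) :
    (let _ := oModule lam hs M h; lam a • m) = a • m := by
  let _ := h.module
  change (RingHom.quotientKerEquivOfSurjective hs).symm (lam a) • m = a • m
  rw [show (RingHom.quotientKerEquivOfSurjective hs).symm (lam a) = Ideal.Quotient.mk _ a from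
    (RingEquiv.symm_apply_eq _).mpr rfl, h.mk_smul]

theorem exists_mem_annihilator_ker_notMem_ker {𝒪 A : Type} [CommRing 𝒪] [IsDomain 𝒪]
    [IsDiscreteValuationRing 𝒪] [CommRing A] [IsNoetherianRing A] (lam : A →+* 𝒪)
    (hs : Function.Surjective lam)
    (hfin : OFiniteLength lam hs (RingHom.ker lam).Cotangent
      (conormal_torsion (RingHom.ker lam))) :
    ∃ s ∈ Submodule.annihilator (RingHom.ker lam), s ∉ RingHom.ker lam := by
  let _ := oModule lam hs _ (conormal_torsion (RingHom.ker lam))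
  obtain ⟨ϖ, hϖ⟩ := IsDiscreteValuationRing.exists_irreducible 𝒪
  obtain ⟨k, hk⟩ := exists_pow_smul_eq_zero_of_isFiniteLength hfin
    (r := ϖ) (by rw [IsLocalRing.jacobson_eq_maximalIdeal ⊥ bot_ne_top]; exact hϖ.not_isUnit)
  obtain ⟨t, ht⟩ := hs (ϖ ^ k)
  have := RingHom.ker_isPrime lam
  refine exists_mem_annihilator_notMem_of_smul_cotangent (t := t)
    (fun h ↦ pow_ne_zero k hϖ.ne_zero (ht ▸ h)) fun c ↦ ?_
  rw [← oModule_smul lam hs _ (conormal_torsion _), ht]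
  exact hk c

theorem exists_pow_mem_ker_sup_span {𝒪 A : Type*} [CommRing 𝒪] [IsDomain 𝒪]
    [IsDiscreteValuationRing 𝒪] [CommRing A] [IsLocalRing A] (lam : A →+* 𝒪)
    (hs : Function.Surjective lam) {s x : A} (hsP : s ∉ RingHom.ker lam)
    (hx : x ∈ maximalIdeal A) :
    ∃ n : ℕ, x ^ n ∈ RingHom.ker lam ⊔ Ideal.span {s} := by
  have := IsLocalHom.of_surjective lam hs
  obtain ⟨n, c, hc⟩ := IsDiscreteValuationRing.exists_dvd_pow hsP (map_nonunit lam x hx)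
  obtain ⟨b, rfl⟩ := hs c
  refine ⟨n, (sub_add_cancel (x ^ n) (s * b)) ▸ Submodule.add_mem_sup ?_
    (Ideal.mul_mem_right _ _ (Ideal.mem_span_singleton_self s))⟩
  rw [RingHom.mem_ker, map_sub, map_pow, map_mul, hc, sub_self]

theorem statement4_general
    (𝒪 : Type) [CommRing 𝒪] [IsDomain 𝒪] [IsDiscreteValuationRing 𝒪]
    (A : Type) [CommRing A] [IsLocalRing A] [IsNoetherianRing A]
    (lam : A →+* 𝒪) (hs : Function.Surjective lam)
    (hfin : OFiniteLength lam hs (RingHom.ker lam).Cotangent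
      (conormal_torsion (RingHom.ker lam)))
    (M : Type) [AddCommGroup M] [Module A M]
    (hdepth : 1 ≤ mDepth A M) :
    Submodule.torsionBySet A M (RingHom.ker lam) ⊓
      Submodule.torsionBySet A M (Submodule.annihilator (RingHom.ker lam)) = ⊥ ∧
    (Submodule.annihilator (RingHom.ker lam) • (⊤ : Submodule A M)) ⊓
      (RingHom.ker lam • (⊤ : Submodule A M)) = ⊥ := by
  obtain ⟨s, hsI, hsP⟩ := exists_mem_annihilator_ker_notMem_ker lam hs hfin
  obtain ⟨x, hxm, hx⟩ := exists_isSMulRegular_of_one_le_mDepth hdepth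
  obtain ⟨n, hn⟩ := exists_pow_mem_ker_sup_span lam hs hsP hxm
  have hxn : x ^ n ∈ RingHom.ker lam ⊔ Submodule.annihilator (RingHom.ker lam) :=
    sup_le_sup_left ((Ideal.span_singleton_le_iff_mem _).mpr hsI) _ hn
  have htorsion : Submodule.torsionBySet A M (RingHom.ker lam) ⊓
      Submodule.torsionBySet A M (Submodule.annihilator (RingHom.ker lam)) = ⊥ := by
    rw [Submodule.torsionBySet_inf_torsionBySet]
    exact Submodule.torsionBySet_eq_bot_of_isSMulRegular hxn (hx.pow n)
  refine ⟨htorsion, eq_bot_iff.mpr (htorsion ▸ inf_le_inf ?_ ?_)⟩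
  · exact Submodule.smul_top_le_torsionBySet (Submodule.mul_annihilator _)
  · exact Submodule.smul_top_le_torsionBySet (Submodule.annihilator_mul _)

/-- Let `(A, λ_A)` be an object of `C_𝒪` and `M` a finitely generated
`A`-module with `depth_A M ≥ 1`.  Then `M[𝔭_A] ∩ M[I_A] = 0`; in particular
`I_A·M ∩ 𝔭_A·M = 0`. -/
theorem statement4
    (𝒪 : Type) [CommRing 𝒪] [IsDomain 𝒪] [IsDiscreteValuationRing 𝒪]
    (A : Type) [CommRing A] [IsLocalRing A] [IsNoetherianRing A]
    (lam : A →+* 𝒪) (hs : Function.Surjective lam)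
    (hfin : OFiniteLength lam hs (RingHom.ker lam).Cotangent
      (conormal_torsion (RingHom.ker lam)))
    (M : Type) [AddCommGroup M] [Module A M] [Module.Finite A M]
    (hdepth : 1 ≤ mDepth A M) :
    Submodule.torsionBySet A M (RingHom.ker lam) ⊓
      Submodule.torsionBySet A M (Submodule.annihilator (RingHom.ker lam)) = ⊥ ∧
    (Submodule.annihilator (RingHom.ker lam) • (⊤ : Submodule A M)) ⊓
      (RingHom.ker lam • (⊤ : Submodule A M)) = ⊥ :=
  statement4_general 𝒪 A lam hs hfin M hdepth
end

section
/- Let (A, λ_A) be an object of C_𝒪 with depth A = 1. Then the ideal I_A ⊂ A is principal, I_A is free of rank one as an 𝒪-module, and I_A/I_A² is free of rank one as a Ψ_A-module. -/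
open IsLocalRing CategoryTheory

/-!
Since `depth A = 1` there is a nonzerodivisor `x` in the maximal ideal. As `Φ_A` is a torsion
`𝒪`-module, some `a ∉ 𝔭` satisfies `a𝔭 ⊆ 𝔭²`, and the determinant trick produces `s ∈ I_A` with
`λ(s) = λ(a)ⁿ ≠ 0`. Then `λ` is injective on `I_A`: for `t ∈ I_A ∩ 𝔭` we have `st = 0`, and
`λ(s)` divides a power of `λ(x)` in the DVR `𝒪`, so some `xᵏ t = 0`. Thus `λ` identifies `I_A`
with the nonzero ideal `λ(I_A) = (g)` of `𝒪`, whence `I_A = (f)` with `λ(f) = g`, `I_A ≅ 𝒪`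
and `I_A/I_A² ≅ (g)/(g²) ≅ 𝒪/(g)`.
-/

open RingTheory.Sequence in
theorem exists_isSMulRegular_of_mDepth_ne_zero {A M : Type} [CommRing A] [IsLocalRing A]
    [AddCommGroup M] [Module A M] (h : mDepth A M ≠ 0) :
    ∃ x ∈ maximalIdeal A, IsSMulRegular M x := by
  by_contra! hnone
  refine h (nonpos_iff_eq_zero.mp (sSup_le ?_))
  rintro n ⟨rs, rfl, hmem, hreg⟩
  cases rs with
  | nil => simp
  | cons x rs =>
    exact absurd ((isWeaklyRegular_cons_iff M x rs).mp hreg.toIsWeaklyRegular).1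
      (hnone x (hmem x List.mem_cons_self))

theorem Module.isTorsion_of_isArtinian {R M : Type} [CommRing R] [IsDomain R] [AddCommGroup M]
    [Module R M] [IsArtinian R M] (hR : ¬IsField R) : Module.IsTorsion R M := by
  intro x
  by_contra! hx
  have hinj : Function.Injective (LinearMap.toSpanSingleton R M x) := by
    refine (injective_iff_map_eq_zero _).mpr fun c hc => by_contra fun hc0 => ?_
    exact hx ⟨c, mem_nonZeroDivisors_of_ne_zero hc0⟩ hc
  have : IsArtinianRing R := isArtinian_of_injective _ hinj
  exact hR (IsArtinianRing.isField_of_isDomain R)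

theorem IsFiniteLength.exists_ne_zero_smul_eq_zero {R M : Type} [CommRing R] [IsDomain R]
    [AddCommGroup M] [Module R M] (hR : ¬IsField R) (hM : IsFiniteLength R M) :
    ∃ c : R, c ≠ 0 ∧ ∀ m : M, c • m = 0 := by
  obtain ⟨_, _⟩ := isFiniteLength_iff_isNoetherian_isArtinian.mp hM
  obtain ⟨c, hc, hc0⟩ :=
    Submodule.annihilator_top_inter_nonZeroDivisors (Module.isTorsion_of_isArtinian (M := M) hR)
  exact ⟨c, nonZeroDivisors.ne_zero hc0,
    fun m => Submodule.mem_annihilator.mp hc m Submodule.mem_top⟩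

theorem IsDiscreteValuationRing.exists_dvd_pow_of_mem_maximalIdeal {R : Type} [CommRing R]
    [IsDomain R] [IsDiscreteValuationRing R] {b y : R} (hb : b ≠ 0)
    (hy : y ∈ IsLocalRing.maximalIdeal R) :
    ∃ k : ℕ, b ∣ y ^ k := by
  obtain ⟨ϖ, hϖ⟩ := exists_irreducible R
  obtain ⟨k, hk⟩ := ideal_eq_span_pow_irreducible (s := Ideal.span {b})
    (by simpa using hb) hϖ
  refine ⟨k, Ideal.mem_span_singleton.mp ?_⟩
  rw [hk, ← Ideal.span_singleton_pow, ← hϖ.maximalIdeal_eq]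
  exact Ideal.pow_mem_pow hy k

theorem Ideal.exists_mem_annihilator_sub_pow_mem {A : Type} [CommRing A] {𝔭 : Ideal A}
    (h𝔭 : 𝔭.FG) {a : A} (ha : ∀ p ∈ 𝔭, a * p ∈ 𝔭 ^ 2) :
    ∃ s ∈ Submodule.annihilator 𝔭, ∃ n : ℕ, s - a ^ n ∈ 𝔭 := by
  have : Module.Finite A 𝔭 := Module.Finite.iff_fg.mpr h𝔭
  have hrange : LinearMap.range (algebraMap A (Module.End A 𝔭) a) ≤ 𝔭 • ⊤ := by
    rintro _ ⟨p, rfl⟩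
    rw [Submodule.mem_smul_top_iff, smul_eq_mul, ← pow_two]
    exact ha p p.2
  obtain ⟨q, hq_monic, -, hq_coeff, hq_aeval⟩ :=
    LinearMap.exists_monic_and_natDegree_eq_and_coeff_mem_pow_and_aeval_eq_zero A _ 𝔭 hrange
  rw [Polynomial.aeval_algebraMap_apply_eq_algebraMap_eval] at hq_aeval
  refine ⟨q.eval a, Submodule.mem_annihilator.mpr fun p hp => ?_, q.natDegree, ?_⟩
  · simpa using congrArg Subtype.val (LinearMap.congr_fun hq_aeval ⟨p, hp⟩)
  · rw [Polynomial.eval_eq_sum_range, Finset.sum_range_succ, hq_monic.coeff_natDegree, one_mul,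
      add_sub_cancel_right]
    refine Ideal.sum_mem _ fun i hi => Ideal.mul_mem_right _ _ ?_
    exact Ideal.pow_le_self (Nat.sub_ne_zero_of_lt (Finset.mem_range.mp hi)) (hq_coeff i)

section

variable {𝒪 A : Type} [CommRing 𝒪] [CommRing A] {lam : A →+* 𝒪}

theorem oModule_lam_smul (hs : Function.Surjective lam) (M : Type) [AddCommGroup M] [Module A M]
    (h : Module.IsTorsionBySet A M (RingHom.ker lam : Set A)) (a : A) (x : M) :
    letI := oModule lam hs M h
    lam a • x = a • x := by
  let := h.module
  have hmk : (RingHom.quotientKerEquivOfSurjective hs).symm (lam a) = Ideal.Quotient.mk _ a :=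
    (RingEquiv.symm_apply_eq _).mpr rfl
  change ((RingHom.quotientKerEquivOfSurjective hs).symm (lam a)) • x = a • x
  rw [hmk]
  exact Module.IsTorsionBySet.mk_smul h a x

theorem RingHom.mul_eq_mul_of_mem_annihilator_ker {t y z : A}
    (ht : t ∈ Submodule.annihilator (RingHom.ker lam)) (h : lam y = lam z) : y * t = z * t := by
  rw [← sub_eq_zero, ← sub_mul, mul_comm]
  exact Submodule.mem_annihilator.mp ht _ (by rw [RingHom.mem_ker, map_sub, h, sub_self])

theorem RingHom.mul_eq_zero_iff_of_mem_annihilator_ker [NoZeroDivisors 𝒪] {f b : A}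
    (hf : f ∈ Submodule.annihilator (RingHom.ker lam)) (hf0 : lam f ≠ 0) :
    b * f = 0 ↔ lam b = 0 := by
  refine ⟨fun h => ?_, fun h => ?_⟩
  · simpa [hf0] using congrArg lam h
  · simpa using lam.mul_eq_mul_of_mem_annihilator_ker hf (y := b) (z := 0) (by simpa using h)

/-- Some power of `λ x` is a multiple of `λ s`, and `s` kills `t ∈ 𝔭`, so a power of the
nonzerodivisor `x` kills `t`. -/
theorem eq_zero_of_mem_annihilator_ker [IsDomain 𝒪] [IsDiscreteValuationRing 𝒪] [IsLocalRing A]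
    (hs : Function.Surjective lam) {x s t : A} (hx : x ∈ maximalIdeal A)
    (hxreg : IsSMulRegular A x)
    (hsI : s ∈ Submodule.annihilator (RingHom.ker lam)) (hs0 : lam s ≠ 0)
    (htI : t ∈ Submodule.annihilator (RingHom.ker lam)) (ht0 : lam t = 0) : t = 0 := by
  have : IsLocalHom lam := .of_surjective lam hs
  obtain ⟨k, c, hc⟩ := IsDiscreteValuationRing.exists_dvd_pow_of_mem_maximalIdeal hs0
    (map_nonunit lam x hx)
  obtain ⟨e, rfl⟩ := hs c
  have hst : s * t = 0 := Submodule.mem_annihilator.mp hsI t ht0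
  refine hxreg.pow k ?_
  change x ^ k * t = x ^ k * 0
  rw [mul_zero, lam.mul_eq_mul_of_mem_annihilator_ker htI (z := s * e) (by simp [hc]),
    mul_right_comm, hst, zero_mul]

theorem Ideal.exists_eq_span_singleton_of_injOn [IsPrincipalIdealRing 𝒪]
    (hs : Function.Surjective lam) {J : Ideal A} (hinj : ∀ t ∈ J, lam t = 0 → t = 0) :
    ∃ f : A, J = Ideal.span {f} := by
  obtain ⟨g, hg⟩ := Submodule.IsPrincipal.principal (Ideal.map lam J)
  replace hg : Ideal.map lam J = Ideal.span {g} := hg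
  obtain ⟨f, hfJ, rfl⟩ := (Ideal.mem_map_iff_of_surjective lam hs).mp
    (hg ▸ Ideal.mem_span_singleton_self g)
  refine ⟨f, le_antisymm (fun t ht => ?_) (Ideal.span_singleton_le_iff_mem _ |>.mpr hfJ)⟩
  obtain ⟨c, hc⟩ := Ideal.mem_span_singleton'.mp (hg ▸ Ideal.mem_map_of_mem lam ht)
  obtain ⟨b, rfl⟩ := hs c
  have htb : t - b * f = 0 :=
    hinj _ (J.sub_mem ht (J.mul_mem_left b hfJ)) (by rw [map_sub, map_mul, hc, sub_self])
  exact Ideal.mem_span_singleton'.mpr ⟨b, (sub_eq_zero.mp htb).symm⟩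

/-- The finite length of `Φ_A` over `𝒪` gives `a ∈ A` with `λ(a) ≠ 0` and `a𝔭 ⊆ 𝔭²`;
the determinant trick turns it into an element of `I_A` congruent to a power of `a`. -/
theorem exists_mem_annihilator_ker_ne_zero [IsDomain 𝒪] [IsNoetherianRing A] (hO : ¬IsField 𝒪)
    (hs : Function.Surjective lam)
    (hfin : OFiniteLength lam hs (RingHom.ker lam).Cotangent (conormal_torsion (RingHom.ker lam))) :
    ∃ s ∈ Submodule.annihilator (RingHom.ker lam), lam s ≠ 0 := by
  let := oModule lam hs _ (conormal_torsion (RingHom.ker lam))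
  obtain ⟨c, hc0, hc⟩ := IsFiniteLength.exists_ne_zero_smul_eq_zero hO hfin
  obtain ⟨a, rfl⟩ := hs c
  have ha : ∀ p ∈ RingHom.ker lam, a * p ∈ RingHom.ker lam ^ 2 := fun p hp => by
    have := hc ((RingHom.ker lam).toCotangent ⟨p, hp⟩)
    rwa [oModule_lam_smul, ← map_smul, Ideal.toCotangent_eq_zero] at this
  obtain ⟨s, hsI, n, hsn⟩ :=
    Ideal.exists_mem_annihilator_sub_pow_mem (IsNoetherian.noetherian _) ha
  refine ⟨s, hsI, ?_⟩
  rw [← sub_add_cancel s (a ^ n), map_add, RingHom.mem_ker.mp hsn, zero_add, map_pow]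
  exact pow_ne_zero n hc0

theorem mem_annihilator_ker_of_eq_span_singleton {J : Ideal A}
    (hJ : Module.IsTorsionBySet A J (RingHom.ker lam : Set A))
    {f : A} (hJf : J = Ideal.span {f}) : f ∈ Submodule.annihilator (RingHom.ker lam) :=
  Submodule.mem_annihilator.mpr fun p hp => by
    simpa [mul_comm] using congrArg Subtype.val
      (@hJ ⟨f, hJf ▸ Ideal.mem_span_singleton_self f⟩ ⟨p, hp⟩)

theorem nonempty_linearEquiv_of_eq_span_singleton [IsDomain 𝒪]
    (hs : Function.Surjective lam) {J : Ideal A}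
    (hJ : Module.IsTorsionBySet A J (RingHom.ker lam : Set A)) {f : A}
    (hJf : J = Ideal.span {f}) (hf0 : lam f ≠ 0) :
    letI := oModule lam hs J hJ
    Nonempty (J ≃ₗ[𝒪] 𝒪) := by
  let := oModule lam hs J hJ
  have hf : f ∈ J := hJf ▸ Ideal.mem_span_singleton_self f
  have hbij : Function.Bijective (LinearMap.toSpanSingleton 𝒪 J ⟨f, hf⟩) := by
    refine ⟨(injective_iff_map_eq_zero _).mpr fun c hc => ?_, fun ⟨t, ht⟩ => ?_⟩
    · obtain ⟨b, rfl⟩ := hs c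
      rw [LinearMap.toSpanSingleton_apply, oModule_lam_smul] at hc
      exact (lam.mul_eq_zero_iff_of_mem_annihilator_ker
        (mem_annihilator_ker_of_eq_span_singleton hJ hJf) hf0).mp (congrArg Subtype.val hc)
    · obtain ⟨b, rfl⟩ := Ideal.mem_span_singleton'.mp (hJf ▸ ht)
      exact ⟨lam b, by rw [LinearMap.toSpanSingleton_apply, oModule_lam_smul]; rfl⟩
  exact ⟨(LinearEquiv.ofBijective _ hbij).symm⟩

theorem nonempty_cotangent_linearEquiv_of_eq_span_singleton [IsDomain 𝒪]
    (hs : Function.Surjective lam) {J : Ideal A}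
    (hJ : Module.IsTorsionBySet A J (RingHom.ker lam : Set A)) {f : A}
    (hJf : J = Ideal.span {f}) (hf0 : lam f ≠ 0) :
    letI := oModule lam hs J.Cotangent (cotangent_torsion hJ)
    Nonempty (J.Cotangent ≃ₗ[𝒪] 𝒪 ⧸ Ideal.map lam J) := by
  let := oModule lam hs J.Cotangent (cotangent_torsion hJ)
  have hf : f ∈ J := hJf ▸ Ideal.mem_span_singleton_self f
  have hmul_eq_zero {b : A} : b * f = 0 ↔ lam b = 0 :=
    lam.mul_eq_zero_iff_of_mem_annihilator_ker
      (mem_annihilator_ker_of_eq_span_singleton hJ hJf) hf0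
  let ψ := LinearMap.toSpanSingleton 𝒪 J.Cotangent (J.toCotangent ⟨f, hf⟩)
  have hψ (b : A) : ψ (lam b) = J.toCotangent ⟨b * f, J.mul_mem_left b hf⟩ := by
    rw [LinearMap.toSpanSingleton_apply, oModule_lam_smul, ← map_smul]; rfl
  have hψ_surj : Function.Surjective ψ := by
    intro z
    obtain ⟨⟨t, ht⟩, rfl⟩ := J.toCotangent_surjective z
    obtain ⟨b, rfl⟩ := Ideal.mem_span_singleton'.mp (hJf ▸ ht)
    exact ⟨lam b, hψ b⟩
  have hψ_ker : LinearMap.ker ψ = Ideal.map lam J := by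
    ext c
    obtain ⟨b, rfl⟩ := hs c
    rw [LinearMap.mem_ker, hψ, Ideal.toCotangent_eq_zero, Subtype.coe_mk, hJf, Ideal.map_span,
      Set.image_singleton, Ideal.span_singleton_pow, Ideal.mem_span_singleton',
      Ideal.mem_span_singleton', hs.exists]
    refine exists_congr fun r => ?_
    calc r * f ^ 2 = b * f ↔ (b - r * f) * f = 0 := by
          rw [sub_mul, sub_eq_zero, eq_comm, pow_two, mul_assoc]
      _ ↔ lam (b - r * f) = 0 := hmul_eq_zero
      _ ↔ lam r * lam f = lam b := by rw [map_sub, map_mul, sub_eq_zero, eq_comm]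
  exact ⟨(ψ.quotKerEquivOfSurjective hψ_surj).symm.trans (Submodule.quotEquivOfEq _ _ hψ_ker)⟩

end

/-- Let `(A, λ_A)` be an object of `C_𝒪` with `depth A = 1`.  Then the
ideal `I_A = A[𝔭_A]` is principal, `I_A` is free of rank one as an `𝒪`-module, and
`I_A/I_A²` is free of rank one as a `Ψ_A`-module (where `Ψ_A = 𝒪/λ_A(I_A)`);
the latter two conditions are expressed by `𝒪`-linear isomorphisms `I_A ≅ 𝒪` and
`I_A/I_A² ≅ Ψ_A`. -/
theorem statement6
    (𝒪 : Type) [CommRing 𝒪] [IsDomain 𝒪] [IsDiscreteValuationRing 𝒪]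
    (A : Type) [CommRing A] [IsLocalRing A] [IsNoetherianRing A]
    (lam : A →+* 𝒪) (hs : Function.Surjective lam)
    (hfin : OFiniteLength lam hs (RingHom.ker lam).Cotangent
      (conormal_torsion (RingHom.ker lam)))
    (hdepth : mDepth A A = 1) :
    letI : Module 𝒪 (Submodule.annihilator (RingHom.ker lam) : Ideal A) :=
      oModule lam hs _ (annihilator_torsion (RingHom.ker lam))
    letI : Module 𝒪 (Submodule.annihilator (RingHom.ker lam) : Ideal A).Cotangent :=
      oModule lam hs _ (cotangent_torsion (annihilator_torsion (RingHom.ker lam)))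
    (Submodule.annihilator (RingHom.ker lam) : Ideal A).IsPrincipal ∧
    Nonempty ((Submodule.annihilator (RingHom.ker lam) : Ideal A) ≃ₗ[𝒪] 𝒪) ∧
    Nonempty ((Submodule.annihilator (RingHom.ker lam) : Ideal A).Cotangent ≃ₗ[𝒪]
      (𝒪 ⧸ Ideal.map lam (Submodule.annihilator (RingHom.ker lam)))) := by
  obtain ⟨x, hx, hxreg⟩ := exists_isSMulRegular_of_mDepth_ne_zero (hdepth ▸ one_ne_zero)
  obtain ⟨s, hsI, hs0⟩ :=
    exists_mem_annihilator_ker_ne_zero (IsDiscreteValuationRing.not_isField 𝒪) hs hfin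
  obtain ⟨f, hf⟩ := Ideal.exists_eq_span_singleton_of_injOn hs
    fun t htI ht0 => eq_zero_of_mem_annihilator_ker hs hx hxreg hsI hs0 htI ht0
  have hf0 : lam f ≠ 0 := by
    obtain ⟨b, rfl⟩ := Ideal.mem_span_singleton'.mp (hf ▸ hsI)
    exact right_ne_zero_of_mul (by rwa [map_mul] at hs0)
  exact ⟨⟨f, hf⟩,
    nonempty_linearEquiv_of_eq_span_singleton hs (annihilator_torsion _) hf hf0,
    nonempty_cotangent_linearEquiv_of_eq_span_singleton hs (annihilator_torsion _) hf hf0⟩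
end
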